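/- Cover-distributing distributors compose: if H : (C,J) ⇸ (D,K) is cover-distributing from J to K and G : (D,K) ⇸ (B,L) is cover-distributing from K to L, then the composite distributor G ⊗ H, defined by the coend (G⊗H)(b,c) = ∫^d H(d,c) × G(b,d), is cover-distributing from J to L. -/

import Mathlib

open CategoryTheory CategoryTheory.Limits Opposite

universe u

namespace DistPaper

variable {B C D : Type u} [SmallCategory B] [SmallCategory C] [SmallCategory D]

/-- A distributor `H : C ⇸ D` is a functor `Dᵒᵖ × C ⥤ Type u`. -/
abbrev Dist (C D : Type u) [SmallCategory C] [SmallCategory D] : Type (u + 1) :=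
  Dᵒᵖ × C ⥤ Type u

/-- Action of a distributor on a pair of morphisms:
`hmap H v u : H(d, c) → H(d', c')` for `v : d' ⟶ d` and `u : c ⟶ c'`. -/
def hmap (H : Dist C D) {d d' : D} {c c' : C} (v : d' ⟶ d) (u : c ⟶ c') :
    H.obj (op d, c) → H.obj (op d', c') :=
  H.map ((v.op, u) : (op d, c) ⟶ (op d', c'))

lemma hmap_hmap (H : Dist C D) {d d' d'' : D} {c c' c'' : C} (v : d' ⟶ d) (v' : d'' ⟶ d')
    (u : c ⟶ c') (u' : c' ⟶ c'') (x : H.obj (op d, c)) :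
    hmap H v' u' (hmap H v u x) = hmap H (v' ≫ v) (u ≫ u') x := by
  dsimp [hmap]
  rw [← FunctorToTypes.map_comp_apply]
  congr 1

lemma hmap_id (H : Dist C D) {d : D} {c : C} (x : H.obj (op d, c)) :
    hmap H (𝟙 d) (𝟙 c) x = x := by
  dsimp [hmap]
  rw [show ((𝟙 (op d), 𝟙 c) : (op d, c) ⟶ (op d, c)) = 𝟙 (op d, c) from rfl, H.map_id]
  rfl

/-- The classifying functor `Ĥ : C ⥤ Psh(D)`, `c ↦ H(-, c)`. -/
def classify (H : Dist C D) : C ⥤ Dᵒᵖ ⥤ Type u :=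
  Functor.curry.obj (CategoryTheory.Prod.swap C Dᵒᵖ ⋙ H)

/-- The distributor associated to a functor `C ⥤ Psh(D)`. -/
def distOfFunctor (G : C ⥤ Dᵒᵖ ⥤ Type u) : Dist C D :=
  CategoryTheory.Prod.swap Dᵒᵖ C ⋙ Functor.uncurry.obj G

/-- A distributor is flat when all its categories of elements `d ↓ H` are cofiltered. -/
def DistFlat (H : Dist C D) : Prop :=
  ∀ d : D, IsCofiltered ((Functor.curry.obj H).obj (op d)).Elements

/-- The cocontinuous extension `lext_H : Psh(C) ⥤ Psh(D)` of a distributor, obtained as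
the left Kan extension of the classifying functor along the Yoneda embedding; pointwise
it is given by the coend `lext_H(X)(d) = ∫^c H(d,c) × X(c)`. -/
noncomputable def lext (H : Dist C D) : (Cᵒᵖ ⥤ Type u) ⥤ Dᵒᵖ ⥤ Type u :=
  yoneda.leftKanExtension (classify H)

/-- The sieve `x^* H[S]` on `d` obtained from a sieve `S` on `c` and a heteromorphism
`x ∈ H(d, c)`. -/
def pullDist (H : Dist C D) {d : D} {c : C} (x : H.obj (op d, c)) (S : Sieve c) :
    Sieve d where
  arrows d' v := ∃ (c' : C) (u : c' ⟶ c) (x' : H.obj (op d', c')),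
    S u ∧ hmap H v (𝟙 c) x = hmap H (𝟙 d') u x'
  downward_closed := by
    rintro d' d'' v ⟨c', u, x', hu, hx⟩ w
    refine ⟨c', u, hmap H w (𝟙 c') x', hu, ?_⟩
    calc hmap H (w ≫ v) (𝟙 c) x
        = hmap H w (𝟙 c) (hmap H v (𝟙 c) x) := by rw [hmap_hmap]; simp
      _ = hmap H w (𝟙 c) (hmap H (𝟙 d') u x') := by rw [hx]
      _ = hmap H (w ≫ 𝟙 d') (u ≫ 𝟙 c) x' := by rw [hmap_hmap]
      _ = hmap H (𝟙 d'' ≫ w) (𝟙 c' ≫ u) x' := by simp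
      _ = hmap H (𝟙 d'') u (hmap H w (𝟙 c') x') := by rw [hmap_hmap]

/-- A distributor is cover-distributing from `J` to `K` if sieves of the form `x^* H[S]`
with `S` a `J`-covering sieve are `K`-covering. -/
def CoverDistributing (J : GrothendieckTopology C) (K : GrothendieckTopology D)
    (H : Dist C D) : Prop :=
  ∀ ⦃d : D⦄ ⦃c : C⦄ (x : H.obj (op d, c)) (S : Sieve c), S ∈ J c → pullDist H x S ∈ K d

section flatSieves

variable (H : Dist C D)

/-- The sieve of condition (1) of `K`-flatness. -/
def flatSieve₁ (d : D) : Sieve d where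
  arrows d' _ := ∃ c : C, Nonempty (H.obj (op d', c))
  downward_closed := by
    rintro d' d'' v ⟨c, ⟨x⟩⟩ w
    exact ⟨c, ⟨hmap H w (𝟙 c) x⟩⟩

/-- The sieve of condition (2) of `K`-flatness. -/
def flatSieve₂ {d : D} {c c' : C} (x : H.obj (op d, c)) (x' : H.obj (op d, c')) :
    Sieve d where
  arrows d' v := ∃ (c'' : C) (u : c'' ⟶ c) (u' : c'' ⟶ c') (x'' : H.obj (op d', c'')),
    hmap H (𝟙 d') u x'' = hmap H v (𝟙 c) x ∧ hmap H (𝟙 d') u' x'' = hmap H v (𝟙 c') x'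
  downward_closed := by
    rintro d' d'' v ⟨c'', u, u', x'', h1, h2⟩ w
    refine ⟨c'', u, u', hmap H w (𝟙 c'') x'', ?_, ?_⟩
    · calc hmap H (𝟙 d'') u (hmap H w (𝟙 c'') x'')
          = hmap H (𝟙 d'' ≫ w) (𝟙 c'' ≫ u) x'' := by rw [hmap_hmap]
        _ = hmap H (w ≫ 𝟙 d') (u ≫ 𝟙 c) x'' := by simp
        _ = hmap H w (𝟙 c) (hmap H (𝟙 d') u x'') := by rw [hmap_hmap]
        _ = hmap H w (𝟙 c) (hmap H v (𝟙 c) x) := by rw [h1]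
        _ = hmap H (w ≫ v) (𝟙 c) x := by rw [hmap_hmap]; simp
    · calc hmap H (𝟙 d'') u' (hmap H w (𝟙 c'') x'')
          = hmap H (𝟙 d'' ≫ w) (𝟙 c'' ≫ u') x'' := by rw [hmap_hmap]
        _ = hmap H (w ≫ 𝟙 d') (u' ≫ 𝟙 c') x'' := by simp
        _ = hmap H w (𝟙 c') (hmap H (𝟙 d') u' x'') := by rw [hmap_hmap]
        _ = hmap H w (𝟙 c') (hmap H v (𝟙 c') x') := by rw [h2]
        _ = hmap H (w ≫ v) (𝟙 c') x' := by rw [hmap_hmap]; simp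

/-- The sieve of condition (3) of `K`-flatness. -/
def flatSieve₃ {d : D} {c c' : C} (u u' : c' ⟶ c) (x : H.obj (op d, c')) :
    Sieve d where
  arrows d' v := ∃ (c'' : C) (w : c'' ⟶ c') (x' : H.obj (op d', c'')),
    w ≫ u = w ≫ u' ∧ hmap H v (𝟙 c') x = hmap H (𝟙 d') w x'
  downward_closed := by
    rintro d' d'' v ⟨c'', w, x', hw, hx⟩ t
    refine ⟨c'', w, hmap H t (𝟙 c'') x', hw, ?_⟩
    calc hmap H (t ≫ v) (𝟙 c') x
        = hmap H t (𝟙 c') (hmap H v (𝟙 c') x) := by rw [hmap_hmap]; simp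
      _ = hmap H t (𝟙 c') (hmap H (𝟙 d') w x') := by rw [hx]
      _ = hmap H (t ≫ 𝟙 d') (w ≫ 𝟙 c') x' := by rw [hmap_hmap]
      _ = hmap H (𝟙 d'' ≫ t) (𝟙 c'' ≫ w) x' := by simp
      _ = hmap H (𝟙 d'') w (hmap H t (𝟙 c'') x') := by rw [hmap_hmap]

end flatSieves

/-- `K`-flatness of a distributor `H : C ⇸ (D, K)`. -/
structure KFlat (K : GrothendieckTopology D) (H : Dist C D) : Prop where
  nonempty : ∀ d : D, flatSieve₁ H d ∈ K d
  spans : ∀ ⦃d : D⦄ ⦃c c' : C⦄ (x : H.obj (op d, c)) (x' : H.obj (op d, c')),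
    flatSieve₂ H x x' ∈ K d
  equalizes : ∀ ⦃d : D⦄ ⦃c c' : C⦄ (u u' : c' ⟶ c) (x : H.obj (op d, c')),
    hmap H (𝟙 d) u x = hmap H (𝟙 d) u' x → flatSieve₃ H u u' x ∈ K d


/-- Action of a distributor `G : D ⇸ B` on a pair of morphisms with opposite first leg. -/
def gmap (G : Dist D B) {bop bop' : Bᵒᵖ} {d d' : D} (β : bop ⟶ bop') (w : d ⟶ d') :
    G.obj (bop, d) → G.obj (bop', d') :=
  G.map ((β, w) : (bop, d) ⟶ (bop', d'))

lemma gmap_gmap (G : Dist D B) {b b' b'' : Bᵒᵖ} {d d' d'' : D} (β : b ⟶ b') (β' : b' ⟶ b'')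
    (w : d ⟶ d') (w' : d' ⟶ d'') (x : G.obj (b, d)) :
    gmap G β' w' (gmap G β w x) = gmap G (β ≫ β') (w ≫ w') x := by
  dsimp [gmap]
  rw [← FunctorToTypes.map_comp_apply]
  congr 1

lemma gmap_id (G : Dist D B) {b : Bᵒᵖ} {d : D} (x : G.obj (b, d)) :
    gmap G (𝟙 b) (𝟙 d) x = x := by
  dsimp [gmap]
  rw [show (((𝟙 b), 𝟙 d) : (b, d) ⟶ (b, d)) = 𝟙 (b, d) from rfl, G.map_id]
  rfl

/-- The coend relation defining the tensor product of distributors. -/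
def tensorRel (G : Dist D B) (H : Dist C D) (bop : Bᵒᵖ) (c : C) :
    (Σ d : D, H.obj (op d, c) × G.obj (bop, d)) →
      (Σ d : D, H.obj (op d, c) × G.obj (bop, d)) → Prop :=
  fun p q => ∃ w : p.1 ⟶ q.1,
    p.2.1 = hmap H w (𝟙 c) q.2.1 ∧ q.2.2 = gmap G (𝟙 bop) w p.2.2

/-- The composite (tensor product) of distributors,
`(G ⊗ H)(b, c) = ∫^d H(d, c) × G(b, d)`. -/
def tensor (G : Dist D B) (H : Dist C D) : Dist C B where
  obj bc := Quot (tensorRel G H bc.1 bc.2)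
  map {bc bc'} f := TypeCat.ofHom <| Quot.map
    (fun p => ⟨p.1, hmap H (𝟙 p.1) f.2 p.2.1, gmap G f.1 (𝟙 p.1) p.2.2⟩)
    (by
      rintro p q ⟨w, h1, h2⟩
      refine ⟨w, ?_, ?_⟩
      · calc hmap H (𝟙 p.1) f.2 p.2.1
            = hmap H (𝟙 p.1) f.2 (hmap H w (𝟙 bc.2) q.2.1) := by rw [h1]
          _ = hmap H (𝟙 p.1 ≫ w) (𝟙 bc.2 ≫ f.2) q.2.1 := by rw [hmap_hmap]
          _ = hmap H (w ≫ 𝟙 q.1) (f.2 ≫ 𝟙 bc'.2) q.2.1 := by simp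
          _ = hmap H w (𝟙 bc'.2) (hmap H (𝟙 q.1) f.2 q.2.1) := by rw [hmap_hmap]
      · calc gmap G f.1 (𝟙 q.1) q.2.2
            = gmap G f.1 (𝟙 q.1) (gmap G (𝟙 bc.1) w p.2.2) := by rw [h2]
          _ = gmap G (𝟙 bc.1 ≫ f.1) (w ≫ 𝟙 q.1) p.2.2 := by rw [gmap_gmap]
          _ = gmap G (f.1 ≫ 𝟙 bc'.1) (𝟙 p.1 ≫ w) p.2.2 := by simp
          _ = gmap G (𝟙 bc'.1) w (gmap G f.1 (𝟙 p.1) p.2.2) := by rw [gmap_gmap])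
  map_id := by
    rintro ⟨bop, c⟩
    ext q
    obtain ⟨p, rfl⟩ := Quot.exists_rep q
    dsimp
    refine congrArg (Quot.mk _) (congrArg (Sigma.mk p.1) ?_)
    rw [hmap_id H p.2.1, gmap_id G p.2.2]
  map_comp := by
    rintro ⟨b1, c1⟩ ⟨b2, c2⟩ ⟨b3, c3⟩ ⟨f1, f2⟩ ⟨g1, g2⟩
    ext q
    obtain ⟨p, rfl⟩ := Quot.exists_rep q
    dsimp
    refine congrArg (Quot.mk _) (congrArg (Sigma.mk p.1) ?_)
    rw [hmap_hmap, gmap_gmap]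
    simp


/-- Cover-distributing distributors compose: if `H : (C,J) ⇸ (D,K)` and `G : (D,K) ⇸ (B,L)`
are cover-distributing, so is the composite `G ⊗ H : (C,J) ⇸ (B,L)` given by the coend
`(G ⊗ H)(b, c) = ∫^d H(d,c) × G(b,d)`. -/
theorem coverDistributing_tensor {B C D : Type u} [SmallCategory B] [SmallCategory C]
    [SmallCategory D] (J : GrothendieckTopology C) (K : GrothendieckTopology D)
    (L : GrothendieckTopology B) (H : Dist C D) (G : Dist D B)
    (hH : CoverDistributing J K H) (hG : CoverDistributing K L G) :
    CoverDistributing J L (tensor G H) := by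
  intro b c x S hS
  obtain ⟨⟨d, h, g⟩, rfl⟩ := Quot.exists_rep x
  refine L.superset_covering ?_ (hG g (pullDist H h S) (hH h S hS))
  rintro b' v ⟨d', w, g', ⟨c', u, h', hu, hh⟩, hg⟩
  refine ⟨c', u, Quot.mk _ ⟨d', h', g'⟩, hu, ?_⟩
  have lhs : hmap (tensor G H) v (𝟙 c) (Quot.mk _ ⟨d, h, g⟩) =
      Quot.mk _ ⟨d, hmap H (𝟙 d) (𝟙 c) h, gmap G v.op (𝟙 d) g⟩ := rfl
  have rhs : hmap (tensor G H) (𝟙 b') u (Quot.mk _ ⟨d', h', g'⟩) =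
      Quot.mk _ ⟨d', hmap H (𝟙 d') u h', gmap G (𝟙 b').op (𝟙 d') g'⟩ := rfl
  rw [lhs, rhs]
  refine (Quot.sound ⟨w, ?_, ?_⟩).symm
  · dsimp only
    rw [← hh, hmap_hmap]
    simp [hmap]
  · dsimp only
    have : gmap G v.op (𝟙 d) g = hmap G v (𝟙 d) g := rfl
    rw [this, hg]
    have h1 : hmap G (𝟙 b') w g' = gmap G (𝟙 (op b')) w g' := rfl
    have h2 : gmap G (𝟙 b').op (𝟙 d') g' = gmap G (𝟙 (op b')) (𝟙 d') g' := rfl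
    rw [h1, h2, gmap_gmap]
    simp [gmap]

end DistPaper
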